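/- arXiv:2111.04387 — 3 statements merged into one kernel-verified Lean document; each statement's English description precedes it below -/
import Mathlib

section
/- Fix an integer t ≥ 3. The collection of number fields ℚ(√(1 − 2m^t)), as m ranges over odd integers with m ≥ 3, is infinite; equivalently, the set of square-free parts of the integers 1 − 2m^t, as m ranges over odd integers m ≥ 3, is an infinite set. -/
open Polynomial NumberField

/-- A fixed choice of complex square root of the integer `d`. -/
noncomputable def sqrtC (d : ℤ) : ℂ := (d : ℂ) ^ ((1 : ℂ) / 2)

lemma sqrtC_sq (d : ℤ) : sqrtC d ^ 2 = (d : ℂ) := by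
  unfold sqrtC
  rcases eq_or_ne (d : ℂ) 0 with h | h
  · rw [h, Complex.zero_cpow (by norm_num : (1 : ℂ) / 2 ≠ 0)]
    simp
  · rw [pow_two, ← Complex.cpow_add _ _ h]
    norm_num

lemma isIntegral_sqrtC (d : ℤ) : IsIntegral ℚ (sqrtC d) := by
  refine ⟨X ^ 2 - C (d : ℚ), monic_X_pow_sub_C _ two_ne_zero, ?_⟩
  have : (Polynomial.aeval (sqrtC d)) (X ^ 2 - C (d : ℚ)) = 0 := by
    simp [sqrtC_sq]
  simpa [Polynomial.aeval_def] using this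

/-- The (number) field `ℚ(√d)`, realized as a subfield of `ℂ`. -/
noncomputable def Qsqrt (d : ℤ) : IntermediateField ℚ ℂ :=
  IntermediateField.adjoin ℚ {sqrtC d}

instance (d : ℤ) : FiniteDimensional ℚ (Qsqrt d) :=
  IntermediateField.adjoin.finiteDimensional (isIntegral_sqrtC d)

instance (d : ℤ) : NumberField (Qsqrt d) := ⟨⟩

-- Lemma A
lemma sqrtC_re_im {d : ℤ} (hd : d < 0) : (sqrtC d).re = 0 ∧ (sqrtC d).im ≠ 0 := by
  have h := sqrtC_sq d
  set x := sqrtC d with hx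
  have hre : x.re ^ 2 - x.im ^ 2 = (d : ℝ) := by
    have := congrArg Complex.re h
    simpa [pow_two, Complex.mul_re] using this
  have him : 2 * x.re * x.im = 0 := by
    have := congrArg Complex.im h
    simp [pow_two, Complex.mul_im] at this
    linarith
  have hdneg : (d : ℝ) < 0 := by exact_mod_cast hd
  have hb : x.im ≠ 0 := by
    intro hb
    rw [hb] at hre
    nlinarith [sq_nonneg x.re]
  refine ⟨?_, hb⟩
  rcases mul_eq_zero.mp him with h1 | h1
  · rcases mul_eq_zero.mp h1 with h2 | h2
    · norm_num at h2
    · exact h2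
  · exact absurd h1 hb

-- subfield
noncomputable def Ssub (d : ℤ) (hd : d < 0) : IntermediateField ℚ ℂ where
  carrier := {z : ℂ | ∃ a b : ℚ, z = (a : ℂ) + (b : ℂ) * sqrtC d}
  mul_mem' := by
    rintro z w ⟨a, b, rfl⟩ ⟨c, e, rfl⟩
    refine ⟨a * c + b * e * d, a * e + b * c, ?_⟩
    push_cast
    linear_combination ((b : ℂ) * e) * sqrtC_sq d
  add_mem' := by
    rintro z w ⟨a, b, rfl⟩ ⟨c, e, rfl⟩
    exact ⟨a + c, b + e, by push_cast; ring⟩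
  one_mem' := ⟨1, 0, by norm_num⟩
  zero_mem' := ⟨0, 0, by norm_num⟩
  algebraMap_mem' := fun r => ⟨r, 0, by simp⟩
  inv_mem' := by
    rintro z ⟨a, b, rfl⟩
    obtain ⟨hre, him⟩ := sqrtC_re_im hd
    rcases eq_or_ne ((a : ℂ) + (b : ℂ) * sqrtC d) 0 with h0 | h0
    · exact ⟨0, 0, by rw [h0]; norm_num⟩
    · have hab : ¬(a = 0 ∧ b = 0) := by
        rintro ⟨rfl, rfl⟩; simp at h0
      set n : ℚ := a ^ 2 - b ^ 2 * d with hn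
      have hnpos : 0 < n := by
        have hd' : (d : ℚ) < 0 := by exact_mod_cast hd
        rcases (not_and_or.mp hab) with h | h
        · nlinarith [sq_nonneg a, sq_nonneg b, sq_pos_of_ne_zero h]
        · nlinarith [sq_nonneg a, sq_pos_of_ne_zero h]
      have hnne : (n : ℂ) ≠ 0 := by
        exact_mod_cast (by positivity : (n:ℚ) ≠ 0)
      have hmul : ((a : ℂ) + (b : ℂ) * sqrtC d) * ((a / n : ℚ) + ((-b / n : ℚ) : ℂ) * sqrtC d) = 1 := by
        have hnc : (n : ℂ) = (a : ℂ) ^ 2 - (b : ℂ) ^ 2 * d := by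
          rw [hn]; push_cast; ring
        push_cast
        field_simp
        linear_combination (-(b:ℂ) * b) * sqrtC_sq d - hnc
      exact ⟨a / n, -b / n, inv_eq_of_mul_eq_one_right hmul⟩

lemma mem_Ssub {d : ℤ} (hd : d < 0) {z : ℂ} (hz : z ∈ Qsqrt d) :
    ∃ a b : ℚ, z = (a : ℂ) + (b : ℂ) * sqrtC d := by
  have hle : Qsqrt d ≤ Ssub d hd := by
    rw [Qsqrt, IntermediateField.adjoin_le_iff]
    intro y hy
    rw [Set.mem_singleton_iff] at hy
    subst hy
    exact ⟨0, 1, by norm_num⟩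
  exact hle hz

lemma keyC {d₁ d₂ : ℤ} (h1 : d₁ < 0) (h2 : d₂ < 0) (hK : Qsqrt d₁ = Qsqrt d₂) :
    ∃ b : ℚ, (d₂ : ℚ) = b ^ 2 * d₁ := by
  have hx2 : sqrtC d₂ ∈ Qsqrt d₁ := by
    rw [hK]
    exact IntermediateField.mem_adjoin_simple_self ℚ (sqrtC d₂)
  obtain ⟨a, b, hab⟩ := mem_Ssub h1 hx2
  obtain ⟨hre1, him1⟩ := sqrtC_re_im h1
  obtain ⟨hre2, him2⟩ := sqrtC_re_im h2
  have ha : a = 0 := by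
    have h := congrArg Complex.re hab
    simp [Complex.add_re, Complex.mul_re, hre1, hre2] at h
    exact_mod_cast h.symm
  subst ha
  simp only [Rat.cast_zero, Complex.ofReal_zero, zero_add] at hab
  have hC : (d₂ : ℂ) = (b : ℂ) ^ 2 * d₁ := by
    rw [← sqrtC_sq d₂, ← sqrtC_sq d₁, hab]
    ring
  exact ⟨b, by exact_mod_cast hC⟩

/-- `N t m = 2 * m ^ t - 1`. -/
def Nval (t : ℕ) (m : ℤ) : ℤ := 2 * m ^ t - 1

/-- recursive sequence: first component is `m n`, second is product of `Nval` so far. -/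
def seq (t : ℕ) : ℕ → ℤ × ℤ
  | 0 => (3, Nval t 3)
  | n + 1 =>
    let p := (seq t n).2
    (3 * p, p * Nval t (3 * p))

lemma seq_props (t : ℕ) (ht : 1 ≤ t) (n : ℕ) :
    Odd ((seq t n).1) ∧ 3 ≤ (seq t n).1 ∧ 3 ∣ (seq t n).1 ∧
    Odd ((seq t n).2) ∧ 1 ≤ (seq t n).2 ∧
    (∀ i ≤ n, Nval t ((seq t i).1) ∣ (seq t n).2) := by
  induction n with
  | zero =>
    simp only [seq]
    refine ⟨⟨1, by norm_num⟩, le_refl _, dvd_refl _, ?_, ?_, ?_⟩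
    · exact ⟨3 ^ t - 1, by unfold Nval; ring⟩
    · have : (1:ℤ) ≤ 3 ^ t := one_le_pow₀ (by norm_num)
      unfold Nval; omega
    · intro i hi
      interval_cases i
      exact dvd_refl _
  | succ n ih =>
    obtain ⟨hm_odd, hm3, hm_dvd, hp_odd, hp_pos, hdvd⟩ := ih
    set p := (seq t n).2 with hp
    have hm' : (seq t (n+1)).1 = 3 * p := rfl
    have hp' : (seq t (n+1)).2 = p * Nval t (3 * p) := rfl
    have hmodd' : Odd (3 * p) := by
      rcases hp_odd with ⟨k, hk⟩
      exact ⟨3 * k + 1, by omega⟩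
    have hN_odd : ∀ m : ℤ, Odd (Nval t m) := by
      intro m
      exact ⟨m ^ t - 1, by unfold Nval; ring⟩
    have hNpos : 1 ≤ Nval t (3 * p) := by
      have h1 : (1:ℤ) ≤ 3 * p := by linarith
      have : (1:ℤ) ≤ (3 * p) ^ t := one_le_pow₀ h1
      unfold Nval; omega
    refine ⟨?_, ?_, ?_, ?_, ?_, ?_⟩
    · rw [hm']; exact hmodd'
    · rw [hm']; linarith
    · rw [hm']; exact ⟨p, rfl⟩
    · rw [hp']
      rcases hp_odd with ⟨k, hk⟩
      rcases hN_odd (3 * p) with ⟨l, hl⟩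
      exact ⟨2 * k * l + k + l, by rw [hl, hk]; ring⟩
    · rw [hp']; exact one_le_mul_of_one_le_of_one_le hp_pos hNpos
    · intro i hi
      rw [hp']
      rcases Nat.lt_or_ge i (n+1) with h | h
      · exact Dvd.dvd.mul_right (hdvd i (by omega)) _
      · have : i = n + 1 := by omega
        subst this
        rw [hm']
        exact Dvd.dvd.mul_left (dvd_refl _) p

lemma Nval_coprime (t : ℕ) (ht : 1 ≤ t) {i j : ℕ} (hij : i < j) :
    IsCoprime (Nval t (seq t i).1) (Nval t (seq t j).1) := by
  obtain ⟨k, rfl⟩ : ∃ k, j = k + 1 := ⟨j - 1, by omega⟩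
  have hdvd : Nval t (seq t i).1 ∣ (seq t k).2 :=
    (seq_props t ht k).2.2.2.2.2 i (by omega)
  have hm : (seq t (k+1)).1 = 3 * (seq t k).2 := rfl
  have h1 : Nval t (seq t i).1 ∣ (seq t (k+1)).1 := by
    rw [hm]; exact Dvd.dvd.mul_left hdvd 3
  have h2 : Nval t (seq t i).1 ∣ 2 * (seq t (k+1)).1 ^ t :=
    Dvd.dvd.mul_left (dvd_pow h1 (by omega)) 2
  obtain ⟨c, hc⟩ := h2
  exact ⟨c, -1, by unfold Nval at hc ⊢; linear_combination -hc⟩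

lemma Nval_mod3 (t : ℕ) (ht : 1 ≤ t) (n : ℕ) : Nval t ((seq t n).1) % 3 = 2 := by
  have h3 : (3:ℤ) ∣ (seq t n).1 := (seq_props t ht n).2.2.1
  obtain ⟨c, hc⟩ := dvd_pow h3 (by omega : t ≠ 0)
  unfold Nval
  omega

lemma sq_mod3 (k : ℤ) : k ^ 2 % 3 ≠ 2 := by
  have h0 : 0 ≤ k % 3 := Int.emod_nonneg k (by norm_num)
  have h1 : k % 3 < 3 := Int.emod_lt_of_pos k (by norm_num)
  rw [pow_two, Int.mul_emod]
  set r := k % 3 with hr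
  interval_cases r <;> decide

lemma sq_of_ratio {N1 N2 : ℤ} (h1 : 0 < N1) (h2 : 0 < N2) (hcop : IsCoprime N1 N2)
    (b : ℚ) (h : (N2 : ℚ) = b ^ 2 * N1) : ∃ k : ℤ, N2 = k ^ 2 := by
  set k : ℤ := b.num with hk
  set l : ℤ := (b.den : ℤ) with hl
  have hl0 : l ≠ 0 := by
    simp [hl]
  have hbd : (b : ℚ) = (k : ℚ) / (l : ℚ) := (Rat.num_div_den b).symm
  have hq : (l : ℚ) ^ 2 * N2 = (k : ℚ) ^ 2 * N1 := by
    have hlq : (l : ℚ) ≠ 0 := Int.cast_ne_zero.mpr hl0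
    rw [h, hbd]
    field_simp
  have hz : l ^ 2 * N2 = k ^ 2 * N1 := by exact_mod_cast hq
  have hcoplk : IsCoprime l k := by
    rw [Int.isCoprime_iff_gcd_eq_one]
    simpa [Int.gcd, hl, hk, Nat.coprime_comm] using b.reduced
  have hcop2 : IsCoprime (l ^ 2) (k ^ 2) := IsCoprime.pow hcoplk
  have hldvd : l ^ 2 ∣ N1 := hcop2.dvd_of_dvd_mul_left ⟨N2, by linarith⟩
  obtain ⟨u, hu⟩ := hldvd
  have hN2 : N2 = k ^ 2 * u := by
    have hl2 : l ^ 2 ≠ 0 := pow_ne_zero _ hl0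
    have : l ^ 2 * N2 = l ^ 2 * (k ^ 2 * u) := by rw [hz, hu]; ring
    exact mul_left_cancel₀ hl2 this
  have hu1 : u ∣ N1 := ⟨l ^ 2, by rw [hu]; ring⟩
  have hu2 : u ∣ N2 := ⟨k ^ 2, by rw [hN2]; ring⟩
  have hunit := hcop.isUnit_of_dvd' hu1 hu2
  rcases Int.isUnit_iff.mp hunit with h | h
  · exact ⟨k, by rw [hN2, h, mul_one]⟩
  · exfalso
    rw [h] at hN2
    nlinarith [sq_nonneg k]

/-- For a fixed integer `t ≥ 3`, the collection of number fields `ℚ(√(1 - 2 m ^ t))`,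
as `m` ranges over odd integers `m ≥ 3`, is infinite. -/
theorem infinite_collection_Qsqrt
    (t : ℕ) (ht3 : 3 ≤ t) :
    {K : IntermediateField ℚ ℂ |
      ∃ m : ℤ, 3 ≤ m ∧ Odd m ∧ K = Qsqrt (1 - 2 * m ^ t)}.Infinite := by
  have ht : 1 ≤ t := by omega
  have hNpos : ∀ n : ℕ, 0 < Nval t (seq t n).1 := by
    intro n
    have hm3 := (seq_props t ht n).2.1
    have : (1:ℤ) ≤ (seq t n).1 ^ t := one_le_pow₀ (by linarith)
    unfold Nval; omega
  have hdneg : ∀ n : ℕ, 1 - 2 * (seq t n).1 ^ t < 0 := by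
    intro n; have := hNpos n; unfold Nval at this; omega
  apply Set.infinite_of_injective_forall_mem
    (f := fun n : ℕ => Qsqrt (1 - 2 * (seq t n).1 ^ t))
  · intro i j hij
    by_contra hne
    simp only at hij
    have hcop : IsCoprime (Nval t (seq t i).1) (Nval t (seq t j).1) := by
      rcases lt_or_gt_of_ne hne with h | h
      · exact Nval_coprime t ht h
      · exact (Nval_coprime t ht h).symm
    obtain ⟨b, hb⟩ := keyC (hdneg i) (hdneg j) hij
    have hQ : ((Nval t (seq t j).1 : ℤ) : ℚ) = b ^ 2 * ((Nval t (seq t i).1 : ℤ) : ℚ) := by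
      unfold Nval
      push_cast at hb ⊢
      linear_combination -hb
    obtain ⟨k, hk⟩ := sq_of_ratio (hNpos i) (hNpos j) hcop b hQ
    exact sq_mod3 k (by rw [← hk]; exact Nval_mod3 t ht j)
  · intro n
    exact ⟨(seq t n).1, (seq_props t ht n).2.1, (seq_props t ht n).1, rfl⟩
end

section
/- Let m ≥ 3 be an integer and let D be a positive integer with gcd(D, m) = 1. Then the Diophantine equation D·x² + 1 = 2·m^y has only finitely many solutions in positive integers (x, y). -/
/-!
Write `y = 2a + r` with `r ∈ {0, 1}`. A solution gives the solution `X = 4mʸ - 1`, `Y = 2mᵃx`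
of the Pell equation `X² - 2Dmʳ Y² = 1`, so `(X, Y) = εᴺ` for the fundamental solution `ε`.
For a prime `p ∣ m`, lifting the exponent along the sequence `N ↦ (εᴺ).y` gives
`v_p((εᴺ).y) ≤ A + v_p(N)`, so `p ^ (a - A) ≤ N` and `X ≥ 2ᴺ ≥ 2 ^ p ^ (a - A)`.
As `X < 4 m ^ (2a + 1)`, this bounds `a`, hence `y` and `x`.
-/

namespace Pell.Solution₁

variable {d : ℤ}

theorem isCoprime_x_y (a : Solution₁ d) : IsCoprime a.x a.y :=
  ⟨a.x, -d * a.y, by linear_combination a.prop⟩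

def yDvdSubgroup (c : ℤ) : Subgroup (Solution₁ d) where
  carrier := {a | c ∣ a.y}
  mul_mem' {a b} ha hb := by
    simp only [Set.mem_ofPred_eq, y_mul] at *
    exact dvd_add (hb.mul_left _) (ha.mul_right _)
  one_mem' := by simp [y_one]
  inv_mem' {a} ha := by simpa [y_inv] using ha

theorem mem_yDvdSubgroup {c : ℤ} {a : Solution₁ d} : a ∈ yDvdSubgroup c ↔ c ∣ a.y := Iff.rfl

theorem y_dvd_y_pow (a : Solution₁ d) (n : ℕ) : a.y ∣ (a ^ n).y :=
  (yDvdSubgroup a.y).pow_mem (dvd_refl a.y) n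

theorem x_pow_modEq (a : Solution₁ d) (n : ℕ) : (a ^ n).x ≡ a.x ^ n [ZMOD d * a.y ^ 2] := by
  induction n with
  | zero => simp
  | succ n ih =>
    obtain ⟨t, ht⟩ := y_dvd_y_pow a n
    rw [pow_succ a, x_mul, Int.modEq_iff_dvd]
    obtain ⟨s, hs⟩ := Int.modEq_iff_dvd.mp ih
    exact ⟨s * a.x - t, by linear_combination a.x * hs - d * a.y * ht⟩

theorem y_pow_succ_modEq (a : Solution₁ d) (n : ℕ) :
    (a ^ (n + 1)).y ≡ (n + 1) * a.x ^ n * a.y [ZMOD d * a.y ^ 3] := by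
  induction n with
  | zero => simp
  | succ n ih =>
    obtain ⟨s, hs⟩ := Int.modEq_iff_dvd.mp (x_pow_modEq a (n + 1))
    obtain ⟨t, ht⟩ := Int.modEq_iff_dvd.mp ih
    rw [pow_succ a, y_mul, Int.modEq_iff_dvd]
    exact ⟨s + a.x * t, by push_cast; linear_combination a.y * hs + a.x * ht⟩

theorem exists_pos_pow_mem_yDvdSubgroup {c : ℤ} (hc : c ≠ 0) (a : Solution₁ d) :
    ∃ n, 0 < n ∧ a ^ n ∈ yDvdSubgroup c := by
  have : NeZero c.natAbs := ⟨Int.natAbs_ne_zero.mpr hc⟩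
  obtain ⟨i, j, hne, heq⟩ := Finite.exists_ne_map_eq_of_infinite
    fun n : ℕ ↦ (((a ^ n).x : ZMod c.natAbs), ((a ^ n).y : ZMod c.natAbs))
  wlog hij : i < j generalizing i j
  · exact this j i hne.symm heq.symm (by omega)
  obtain ⟨hx, hy⟩ := Prod.mk.inj heq
  refine ⟨j - i, by omega, ?_⟩
  have hsub : a ^ (j - i) = a ^ j * (a ^ i)⁻¹ := by
    rw [eq_mul_inv_iff_mul_eq, ← pow_add, Nat.sub_add_cancel hij.le]
  rw [mem_yDvdSubgroup, ← Int.natAbs_dvd, ← ZMod.intCast_zmod_eq_zero_iff_dvd, hsub, y_mul, x_inv,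
    y_inv]
  push_cast
  rw [hx, hy]
  ring

theorem exists_pos_forall_pow_mem_yDvdSubgroup_iff {c : ℤ} (hc : c ≠ 0) (a : Solution₁ d) :
    ∃ r, 0 < r ∧ ∀ n, a ^ n ∈ yDvdSubgroup c ↔ r ∣ n := by
  obtain ⟨k, hk, hmem⟩ := exists_pos_pow_mem_yDvdSubgroup hc a
  have hord (n : ℕ) : (a : Solution₁ d ⧸ yDvdSubgroup c) ^ n = 1 ↔ a ^ n ∈ yDvdSubgroup c := by
    rw [← QuotientGroup.mk_pow, QuotientGroup.eq_one_iff]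
  exact ⟨_, (isOfFinOrder_iff_pow_eq_one.mpr ⟨k, hk, (hord k).mpr hmem⟩).orderOf_pos,
    fun n ↦ by rw [orderOf_dvd_iff_pow_eq_one, hord]⟩

theorem pow_x_le_x_pow (hd : 0 ≤ d) {a : Solution₁ d} (hax : 0 < a.x) (hay : 0 < a.y) (n : ℕ) :
    a.x ^ n ≤ (a ^ n).x := by
  induction n with
  | zero => simp
  | succ n ih =>
    have hy : 0 ≤ (a ^ n).y := by
      cases n with
      | zero => simp
      | succ n => exact (y_pow_succ_pos hax hay n).le
    rw [pow_succ, pow_succ, x_mul]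
    nlinarith [mul_nonneg hd (mul_nonneg hy hay.le)]

section emultiplicity

variable {p : ℕ} (hp : p.Prime)
include hp

/-- Since `(a ^ (n + 1)).y = a.y * ((n + 1) * a.x ^ n + d * a.y ^ 2 * t)` and `p ∤ a.x`, the
second factor has the valuation of `n + 1` as long as the multiple of `p²` cannot interfere. -/
theorem emultiplicity_y_pow_succ {a : Solution₁ d} (hpy : (p : ℤ) ∣ a.y) {n : ℕ}
    (hn : emultiplicity p (n + 1) < 2) :
    emultiplicity (p : ℤ) (a ^ (n + 1)).y =
      emultiplicity (p : ℤ) a.y + emultiplicity p (n + 1) := by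
  have hpZ := Nat.prime_iff_prime_int.mp hp
  obtain ⟨t, ht⟩ := Int.modEq_iff_dvd.mp (y_pow_succ_modEq a n)
  have hpx : ¬ (p : ℤ) ∣ a.x ^ n := fun h ↦
    hpZ.not_isUnit ((isCoprime_x_y a).isUnit_of_dvd' (hpZ.dvd_of_dvd_pow h) hpy)
  have hsplit : (a ^ (n + 1)).y = a.y * (d * a.y ^ 2 * -t + (n + 1 : ℕ) * a.x ^ n) := by
    push_cast; linear_combination -ht
  have hmain : emultiplicity (p : ℤ) ((n + 1 : ℕ) * a.x ^ n) = emultiplicity p (n + 1) := by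
    rw [emultiplicity_mul hpZ, emultiplicity_eq_zero.mpr hpx, add_zero, Int.natCast_emultiplicity]
  have htail : 2 ≤ emultiplicity (p : ℤ) (d * a.y ^ 2 * -t) :=
    le_emultiplicity_of_pow_dvd (((pow_dvd_pow_of_dvd hpy 2).mul_left d).mul_right _)
  rw [hsplit, emultiplicity_mul hpZ, emultiplicity_add_of_gt (hmain ▸ hn.trans_le htail), hmain]

theorem emultiplicity_y_pow_of_not_dvd {a : Solution₁ d} (hpy : (p : ℤ) ∣ a.y) {n : ℕ}
    (hn : ¬ p ∣ n) : emultiplicity (p : ℤ) (a ^ n).y = emultiplicity (p : ℤ) a.y := by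
  obtain ⟨k, rfl⟩ : ∃ k, n = k + 1 :=
    Nat.exists_eq_add_one_of_ne_zero (by rintro rfl; exact hn (dvd_zero p))
  have h0 : emultiplicity p (k + 1) = 0 := emultiplicity_eq_zero.mpr hn
  rw [emultiplicity_y_pow_succ hp hpy (by rw [h0]; norm_num), h0, add_zero]

theorem emultiplicity_y_pow_prime {a : Solution₁ d} (hpy : (p : ℤ) ∣ a.y) :
    emultiplicity (p : ℤ) (a ^ p).y = emultiplicity (p : ℤ) a.y + 1 := by
  obtain ⟨k, hk⟩ := Nat.exists_eq_add_one_of_ne_zero hp.ne_zero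
  have h1 : emultiplicity p (k + 1) = 1 := hk ▸ Nat.Prime.emultiplicity_self hp
  have := emultiplicity_y_pow_succ hp hpy (n := k) (by rw [h1]; norm_num)
  rwa [h1, ← hk] at this

theorem emultiplicity_y_pow {a : Solution₁ d} (hpy : (p : ℤ) ∣ a.y) {n : ℕ} (hn : n ≠ 0) :
    emultiplicity (p : ℤ) (a ^ n).y = emultiplicity (p : ℤ) a.y + emultiplicity p n := by
  obtain ⟨e, k, hk, rfl⟩ := Nat.exists_eq_pow_mul_and_not_dvd hn p hp.ne_one
  have hpow : ∀ e : ℕ, emultiplicity (p : ℤ) (a ^ p ^ e).y = emultiplicity (p : ℤ) a.y + e := by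
    intro e
    induction e with
    | zero => simp
    | succ e ih =>
      rw [pow_succ, pow_mul, emultiplicity_y_pow_prime hp (hpy.trans (y_dvd_y_pow a _)), ih,
        Nat.cast_succ, add_assoc]
  rw [pow_mul, emultiplicity_y_pow_of_not_dvd hp (hpy.trans (y_dvd_y_pow a _)) hk, hpow,
    emultiplicity_mul hp.prime, emultiplicity_pow_self_of_prime hp.prime,
    emultiplicity_eq_zero.mpr hk, add_zero]

theorem emultiplicity_y_pow_le {a : Solution₁ d} (hax : 0 < a.x) (hay : 0 < a.y) :
    ∃ A : ℕ, ∀ n ≠ 0, emultiplicity (p : ℤ) (a ^ n).y ≤ A + emultiplicity p n := by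
  obtain ⟨r, hr, hrank⟩ :=
    exists_pos_forall_pow_mem_yDvdSubgroup_iff (c := p) (by exact_mod_cast hp.ne_zero) a
  have hfin : FiniteMultiplicity (p : ℤ) (a ^ r).y := by
    obtain ⟨k, rfl⟩ := Nat.exists_eq_add_one_of_ne_zero hr.ne'
    exact Int.finiteMultiplicity_iff.mpr ⟨by simpa using hp.ne_one, (y_pow_succ_pos hax hay k).ne'⟩
  refine ⟨multiplicity (p : ℤ) (a ^ r).y, fun n hn ↦ ?_⟩
  by_cases hpn : (p : ℤ) ∣ (a ^ n).y
  · obtain ⟨k, rfl⟩ := (hrank n).mp hpn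
    rw [pow_mul, emultiplicity_y_pow hp ((hrank r).mpr dvd_rfl) (right_ne_zero_of_mul hn),
      hfin.emultiplicity_eq_multiplicity]
    gcongr
    exact emultiplicity_le_emultiplicity_of_dvd_right (dvd_mul_left k r)
  · simp [emultiplicity_eq_zero.mpr hpn]

theorem exists_two_pow_pow_le_x (d : ℤ) : ∃ A : ℕ, ∀ a : Solution₁ d, 1 < a.x → 0 < a.y →
    ∀ k : ℕ, (p : ℤ) ^ k ∣ a.y → (2 : ℤ) ^ p ^ (k - A) ≤ a.x := by
  rcases em (∃ a : Solution₁ d, 1 < a.x) with ⟨a₀, ha₀⟩ | hex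
  swap
  · exact ⟨0, fun a hax ↦ absurd ⟨a, hax⟩ hex⟩
  obtain ⟨f, hf⟩ := IsFundamental.exists_of_not_isSquare (d_pos_of_one_lt_x ha₀)
    (d_nonsquare_of_one_lt_x ha₀)
  obtain ⟨A, hA⟩ := emultiplicity_y_pow_le hp hf.x_pos hf.2.1
  refine ⟨A, fun a hax hay k hk ↦ ?_⟩
  obtain ⟨n, rfl⟩ := hf.eq_pow_of_nonneg (by omega) hay.le
  have hn : n ≠ 0 := by rintro rfl; simp at hay
  have hkn : p ^ (k - A) ∣ n := by
    refine pow_dvd_of_le_emultiplicity ?_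
    rw [ENat.natCast_sub, tsub_le_iff_left]
    exact (le_emultiplicity_of_pow_dvd hk).trans (hA n hn)
  calc (2 : ℤ) ^ p ^ (k - A) ≤ 2 ^ n := pow_le_pow_right₀ one_le_two (Nat.le_of_dvd (by omega) hkn)
    _ ≤ f.x ^ n := pow_le_pow_left₀ zero_le_two hf.1 n
    _ ≤ (f ^ n).x := pow_x_le_x_pow hf.d_pos.le hf.x_pos hf.2.1 n

end emultiplicity

end Pell.Solution₁

theorem Nat.sq_le_two_pow {n : ℕ} (hn : 4 ≤ n) : n ^ 2 ≤ 2 ^ n := by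
  induction n, hn using Nat.le_induction with
  | base => norm_num
  | succ n hn ih => rw [pow_succ 2]; nlinarith

theorem Nat.lt_of_two_pow_le_mul_add {α β b : ℕ} (h : 2 ^ b ≤ α * b + β) : b < α + β + 4 := by
  by_contra! hb
  have := Nat.sq_le_two_pow (show 4 ≤ b by omega)
  nlinarith

theorem pell_eq_of_mul_sq_add_one_eq {D m x : ℤ} {y : ℕ} (h : D * x ^ 2 + 1 = 2 * m ^ y) :
    (4 * m ^ y - 1) ^ 2 - 2 * D * m ^ (y % 2) * (2 * m ^ (y / 2) * x) ^ 2 = 1 := by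
  have hy : m ^ y = m ^ (y % 2) * (m ^ (y / 2)) ^ 2 := by
    rw [← pow_mul, ← pow_add, mul_comm (y / 2), Nat.mod_add_div]
  linear_combination (-8 * m ^ y) * h + (8 * D * x ^ 2) * hy

theorem exists_le_of_two_pow_pow_le {p : ℕ} (hp : 2 ≤ p) (m A : ℕ) :
    ∃ B, ∀ y, 2 ^ p ^ (y / 2 - A) ≤ 4 * m ^ y → y ≤ B := by
  refine ⟨2 * (A + m * (2 * A + 3) + 6) + 1, fun y hy ↦ ?_⟩
  set b := y / 2 - A
  have hmy : 4 * m ^ y ≤ 2 ^ (2 + m * y) := by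
    rw [pow_add, pow_mul]
    exact Nat.mul_le_mul_left 4 (Nat.pow_le_pow_left m.lt_two_pow_self.le y)
  have hpb : p ^ b ≤ 2 + m * y := (Nat.pow_le_pow_iff_right one_lt_two).mp (hy.trans hmy)
  have hyb : y ≤ 2 * (A + b) + 1 := by omega
  have hb : 2 ^ b ≤ (2 * m) * b + (m * (2 * A + 1) + 2) := calc
    2 ^ b ≤ p ^ b := Nat.pow_le_pow_left hp b
    _ ≤ 2 + m * y := hpb
    _ ≤ 2 + m * (2 * (A + b) + 1) := by gcongr
    _ = (2 * m) * b + (m * (2 * A + 1) + 2) := by ring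
  have := Nat.lt_of_two_pow_le_mul_add hb
  nlinarith

theorem exists_two_pow_pow_le_of_mul_sq_add_one_eq {p m D : ℕ} (hp : p.Prime) (hpm : p ∣ m)
    (hm : 0 < m) (hD : 0 < D) :
    ∃ A : ℕ, ∀ x y : ℕ, 0 < x → D * x ^ 2 + 1 = 2 * m ^ y → 2 ^ p ^ (y / 2 - A) ≤ 4 * m ^ y := by
  choose A hA using fun r : ℕ ↦ Pell.Solution₁.exists_two_pow_pow_le_x hp (2 * D * m ^ r : ℤ)
  refine ⟨max (A 0) (A 1), fun x y hx h ↦ ?_⟩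
  have hZ : (D : ℤ) * x ^ 2 + 1 = 2 * m ^ y := by exact_mod_cast h
  let a : Pell.Solution₁ (2 * D * m ^ (y % 2) : ℤ) := .mk _ _ (pell_eq_of_mul_sq_add_one_eq hZ)
  have hax : 1 < a.x := by
    have : (0 : ℤ) < D * x ^ 2 := by positivity
    simp only [a, Pell.Solution₁.x_mk]
    linarith
  have hay : 0 < a.y := by simp only [a, Pell.Solution₁.y_mk]; positivity
  have hdvd : (p : ℤ) ^ (y / 2) ∣ a.y :=
    ((pow_dvd_pow_of_dvd (Int.natCast_dvd_natCast.mpr hpm) _).mul_left 2).mul_right _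
  have hA_le : A (y % 2) ≤ max (A 0) (A 1) := by
    rcases Nat.mod_two_eq_zero_or_one y with hr | hr <;> simp [hr]
  have : (2 : ℤ) ^ p ^ (y / 2 - max (A 0) (A 1)) ≤ 4 * m ^ y := calc
    _ ≤ (2 : ℤ) ^ p ^ (y / 2 - A (y % 2)) := by
      gcongr
      · norm_num
      · exact hp.one_lt.le
    _ ≤ a.x := hA _ a hax hay _ hdvd
    _ ≤ 4 * m ^ y := by simp [a]
  exact_mod_cast this

theorem finite_solutions_Dx_sq_add_one_general
    (m D : ℕ) (hm : 3 ≤ m) (hD : 0 < D) :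
    {xy : ℕ × ℕ | 0 < xy.1 ∧ 0 < xy.2 ∧
      D * xy.1 ^ 2 + 1 = 2 * m ^ xy.2}.Finite := by
  obtain ⟨p, hp, hpm⟩ := Nat.exists_prime_and_dvd (show m ≠ 1 by omega)
  obtain ⟨A, hA⟩ := exists_two_pow_pow_le_of_mul_sq_add_one_eq hp hpm (by omega) hD
  obtain ⟨B, hB⟩ := exists_le_of_two_pow_pow_le hp.two_le m A
  refine ((Set.finite_Iic (2 * m ^ B)).prod (Set.finite_Iic B)).subset ?_
  rintro ⟨x, y⟩ ⟨hx, -, h : D * x ^ 2 + 1 = 2 * m ^ y⟩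
  have hyB : y ≤ B := hB y (hA x y hx h)
  refine ⟨?_, hyB⟩
  calc x ≤ D * x ^ 2 := by nlinarith
    _ ≤ 2 * m ^ y := by omega
    _ ≤ 2 * m ^ B := by gcongr; omega

/-- For an integer `m ≥ 3` and a positive integer `D` with `gcd(D, m) = 1`, the Diophantine
equation `D x² + 1 = 2 m ^ y` has only finitely many solutions in positive integers. -/
theorem finite_solutions_Dx_sq_add_one
    (m D : ℕ) (hm : 3 ≤ m) (hD : 0 < D) (hgcd : Nat.gcd D m = 1) :
    {xy : ℕ × ℕ | 0 < xy.1 ∧ 0 < xy.2 ∧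
      D * xy.1 ^ 2 + 1 = 2 * m ^ xy.2}.Finite :=
  finite_solutions_Dx_sq_add_one_general m D hm hD
end

section
/- Let m ≥ 3 be an odd integer and let p be an odd prime such that 2m^p − 1 is a square-free integer. Then neither 2^{(p−1)/2}·(1 + √(1 − 2m^p)) nor −2^{(p−1)/2}·(1 + √(1 − 2m^p)) is a p-th power of an element of the ring of integers of ℚ(√(1 − 2m^p)). -/
open Polynomial NumberField

/-- The element `√d` of `ℚ(√d)`. -/
noncomputable def sqrtElem (d : ℤ) : Qsqrt d :=
  ⟨sqrtC d, IntermediateField.mem_adjoin_simple_self ℚ (sqrtC d)⟩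

/-!
Put `d = 1 - 2mᵖ < 0` and `w = √d`. Taking norms, `N(β)ᵖ = 2ᵖ⁻¹ (1 - d) = (2m)ᵖ`, so
`N(β) = 2m`. Writing `β = a + b w` with `a, b ∈ ℚ`, the traces `s = 2a` of `β` and `t = 2bd` of
`w β` are rational algebraic integers, hence integers, and `N(β) = a² - b² d` becomes
`t² = (2mᵖ - 1)(8m - s²)`. As `2mᵖ - 1` is square-free it divides `t`, while it exceeds
`8m - s²`; so `t = 0` and `s² = 8m`, which is impossible for odd `m` since `8` is not a square
modulo `16`.
-/

open ComplexConjugate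

@[simp, norm_cast]
lemma coe_sqrtElem (d : ℤ) : (sqrtElem d : ℂ) = sqrtC d := rfl

lemma isIntegral_int_sqrtC (d : ℤ) : IsIntegral ℤ (sqrtC d) :=
  ⟨X ^ 2 - C d, monic_X_pow_sub_C _ two_ne_zero, by simp [eval₂_eq_eval_map, sqrtC_sq]⟩

lemma isIntegral_add_conj {z : ℂ} (hz : IsIntegral ℤ z) : IsIntegral ℤ (z + conj z) :=
  hz.add (hz.map (starRingEnd ℂ).toIntAlgHom)

section
variable {d : ℤ}

lemma re_sqrtC (hd : d < 0) : (sqrtC d).re = 0 := by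
  have hsq := sqrtC_sq d
  have hre := congrArg Complex.re hsq
  have him := congrArg Complex.im hsq
  simp only [pow_two, Complex.mul_re, Complex.mul_im, Complex.intCast_re,
    Complex.intCast_im] at hre him
  have hd' : (d : ℝ) < 0 := by exact_mod_cast hd
  have : (sqrtC d).im ≠ 0 := fun h => by nlinarith
  have : (sqrtC d).re * (sqrtC d).im = 0 := by linarith
  exact (mul_eq_zero.mp this).resolve_right ‹_›

lemma conj_sqrtC (hd : d < 0) : conj (sqrtC d) = -sqrtC d :=
  Complex.ext (by simp [re_sqrtC hd]) (by simp)

lemma normSq_add_mul_sqrtC (hd : d < 0) (a b : ℝ) :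
    Complex.normSq (a + b * sqrtC d) = a ^ 2 - b ^ 2 * d := by
  apply Complex.ofReal_injective
  rw [← Complex.mul_conj, map_add, map_mul, conj_sqrtC hd, Complex.conj_ofReal,
    Complex.conj_ofReal]
  push_cast
  linear_combination (-(b : ℂ) ^ 2) * sqrtC_sq d

lemma exists_rat_eq_add_mul_sqrtC (z : Qsqrt d) :
    ∃ a b : ℚ, (z : ℂ) = a + b * sqrtC d := by
  have hz : (z : ℂ) ∈ (IntermediateField.adjoin ℚ {sqrtC d}).toSubalgebra := z.2
  rw [IntermediateField.adjoin_simple_toSubalgebra_of_isAlgebraic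
    (isIntegral_sqrtC d).isAlgebraic, Algebra.adjoin_singleton_eq_range_aeval] at hz
  obtain ⟨P, hP⟩ := hz
  set q : ℚ[X] := X ^ 2 - C (d : ℚ)
  have hq : q.Monic := monic_X_pow_sub_C _ two_ne_zero
  have hq0 : aeval (sqrtC d) q = 0 := by simp [q, sqrtC_sq]
  have hdeg : (P %ₘ q).degree ≤ 1 := by
    have := degree_modByMonic_lt P hq
    rw [degree_X_pow_sub_C two_pos] at this
    exact Order.le_of_lt_succ this
  refine ⟨(P %ₘ q).coeff 0, (P %ₘ q).coeff 1, ?_⟩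
  have hmod : aeval (sqrtC d) P = aeval (sqrtC d) (P %ₘ q) := by
    conv_lhs => rw [← modByMonic_add_div P q, map_add, map_mul, hq0, zero_mul, add_zero]
  rw [← hP, AlgHom.toRingHom_eq_coe, RingHom.coe_coe, hmod]
  conv_lhs => rw [eq_X_add_C_of_degree_le_one hdeg]
  simp only [map_add, map_mul, aeval_C, aeval_X, eq_ratCast]
  ring

end

lemma exists_int_eq_of_isIntegral_algebraMap {A : Type*} [Ring A] [Nontrivial A] [Algebra ℚ A]
    {q : ℚ} (h : IsIntegral ℤ (algebraMap ℚ A q)) : ∃ s : ℤ, (s : ℚ) = q :=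
  IsIntegrallyClosed.isIntegral_iff.mp
    ((isIntegral_algebraMap_iff (algebraMap ℚ A).injective).mp h)

lemma exists_int_sq_eq_mul_of_normSq_eq {d : ℤ} (hd : d < 0) (β : 𝓞 (Qsqrt d)) {N : ℤ}
    (hN : Complex.normSq (β : Qsqrt d) = N) : ∃ s t : ℤ, t ^ 2 = d * (s ^ 2 - 4 * N) := by
  obtain ⟨a, b, hab⟩ := exists_rat_eq_add_mul_sqrtC (β : Qsqrt d)
  set z : ℂ := ((β : Qsqrt d) : ℂ)
  have hz : IsIntegral ℤ z := β.2.map (Qsqrt d).val.toRingHom.toIntAlgHom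
  have hconj : conj z = a - b * sqrtC d := by
    rw [hab, map_add, map_mul, conj_sqrtC hd, map_ratCast, map_ratCast]
    ring
  obtain ⟨s, hs⟩ : ∃ s : ℤ, (s : ℚ) = 2 * a := by
    refine exists_int_eq_of_isIntegral_algebraMap (A := ℂ) ?_
    have htr : algebraMap ℚ ℂ (2 * a) = z + conj z := by
      rw [hconj, hab, eq_ratCast]
      push_cast
      ring
    exact htr ▸ isIntegral_add_conj hz
  obtain ⟨t, ht⟩ : ∃ t : ℤ, (t : ℚ) = 2 * b * d := by
    refine exists_int_eq_of_isIntegral_algebraMap (A := ℂ) ?_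
    have htr : algebraMap ℚ ℂ (2 * b * d) = sqrtC d * z + conj (sqrtC d * z) := by
      rw [map_mul (starRingEnd ℂ), conj_sqrtC hd, hconj, hab, eq_ratCast]
      push_cast
      linear_combination (-2 * (b : ℂ)) * sqrtC_sq d
    exact htr ▸ isIntegral_add_conj ((isIntegral_int_sqrtC d).mul hz)
  have hnorm : a ^ 2 - b ^ 2 * d = N := by
    have := normSq_add_mul_sqrtC hd a b
    rw [Complex.ofReal_ratCast, Complex.ofReal_ratCast, ← hab, hN] at this
    exact_mod_cast this.symm
  refine ⟨s, t, ?_⟩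
  have : (t : ℚ) ^ 2 = d * (s ^ 2 - 4 * N) := by
    rw [hs, ht, ← hnorm]
    ring
  exact_mod_cast this

lemma normSq_pow_of_pow_eq {d : ℤ} (hd : d < 0) {p : ℕ} (hp : Odd p) {z : ℂ}
    (h : z ^ p = 2 ^ ((p - 1) / 2) * (1 + sqrtC d) ∨
      z ^ p = -(2 ^ ((p - 1) / 2) * (1 + sqrtC d))) :
    Complex.normSq z ^ p = 2 ^ (p - 1) * (1 - d) := by
  obtain ⟨k, rfl⟩ := hp
  rw [show (2 * k + 1 - 1) / 2 = k by omega] at h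
  rw [show 2 * k + 1 - 1 = 2 * k by omega]
  have h1 : Complex.normSq (1 + sqrtC d) = 1 - d := by
    simpa using normSq_add_mul_sqrtC hd 1 1
  have h2 : Complex.normSq (2 ^ k) = 2 ^ (2 * k) := by
    rw [map_pow, pow_mul]
    norm_num [Complex.normSq_apply]
  have hzp : Complex.normSq (z ^ (2 * k + 1)) = Complex.normSq (2 ^ k * (1 + sqrtC d)) := by
    rcases h with h | h <;> simp only [h, Complex.normSq_neg]
  simpa [← map_pow, h1, h2] using hzp

lemma eq_zero_of_sq_eq_mul_of_squarefree {n k t : ℤ} (hn : Squarefree n) (hn0 : 0 < n)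
    (hk : k < n) (h : t ^ 2 = n * k) : t = 0 := by
  by_contra ht
  have hdvd : n ∣ t := (hn.dvd_pow_iff_dvd two_ne_zero).mp ⟨k, h⟩
  have hle : n ≤ |t| := Int.le_of_dvd (abs_pos.mpr ht) ((dvd_abs _ _).mpr hdvd)
  nlinarith [sq_abs t]

lemma sq_ne_eight_mul_of_odd {m : ℤ} (hm : Odd m) (s : ℤ) : s ^ 2 ≠ 8 * m := by
  obtain ⟨k, rfl⟩ := hm
  intro h
  have h16 : (s : ZMod 16) ^ 2 = 8 := by
    have := congrArg (Int.cast : ℤ → ZMod 16) h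
    push_cast at this
    linear_combination this + (k : ZMod 16) * (by decide : (16 : ZMod 16) = 0)
  exact (by decide : ∀ x : ZMod 16, x ^ 2 ≠ 8) _ h16

lemma eight_mul_lt_two_mul_pow_sub_one {m : ℤ} (hm : 3 ≤ m) {p : ℕ} (hp : 3 ≤ p) :
    8 * m < 2 * m ^ p - 1 := by
  have : m ^ 3 ≤ m ^ p := pow_le_pow_right₀ (by linarith) hp
  have : 9 * m ≤ m ^ 3 := by nlinarith [mul_le_mul hm hm (by norm_num) (by linarith)]
  linarith

lemma sq_ne_mul_of_squarefree {m : ℤ} (hm : 3 ≤ m) (hmodd : Odd m) {p : ℕ} (hp : 3 ≤ p)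
    (hsf : Squarefree (2 * m ^ p - 1)) (s t : ℤ) :
    t ^ 2 ≠ (1 - 2 * m ^ p) * (s ^ 2 - 4 * (2 * m)) := by
  intro h
  have hlt := eight_mul_lt_two_mul_pow_sub_one hm hp
  have ht : t = 0 := eq_zero_of_sq_eq_mul_of_squarefree hsf (by linarith) (k := 8 * m - s ^ 2)
    (by nlinarith [sq_nonneg s]) (by rw [h]; ring)
  subst ht
  have hs : s ^ 2 - 4 * (2 * m) = 0 :=
    (mul_eq_zero.mp h.symm).resolve_left (by linarith)
  exact sq_ne_eight_mul_of_odd hmodd s (by linarith)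

/-- If `m ≥ 3` is odd and `p` is an odd prime such that `2 m ^ p - 1` is square-free, then
neither `2 ^ ((p-1)/2) (1 + √(1 - 2 m ^ p))` nor its negative is a `p`-th power of an element
of the ring of integers of `ℚ(√(1 - 2 m ^ p))`. -/
theorem not_pth_power_of_squarefree
    (m : ℤ) (hm : 3 ≤ m) (hmodd : Odd m)
    (p : ℕ) (hp : p.Prime) (hpodd : Odd p)
    (hsf : Squarefree (2 * m ^ p - 1)) :
    ¬ ∃ β : 𝓞 (Qsqrt (1 - 2 * m ^ p)),
        (β : Qsqrt (1 - 2 * m ^ p)) ^ p =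
            2 ^ ((p - 1) / 2) * (1 + sqrtElem (1 - 2 * m ^ p)) ∨
        (β : Qsqrt (1 - 2 * m ^ p)) ^ p =
            -(2 ^ ((p - 1) / 2) * (1 + sqrtElem (1 - 2 * m ^ p))) := by
  rintro ⟨β, hβ⟩
  have hp3 : 3 ≤ p := by
    have := hp.two_le
    obtain ⟨k, rfl⟩ := hpodd
    omega
  have hd : 1 - 2 * m ^ p < 0 := by
    have : 1 ≤ m ^ p := one_le_pow₀ (by linarith)
    linarith
  have hβC := hβ.imp (congrArg (Qsqrt _).val) (congrArg (Qsqrt _).val)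
  simp only [map_pow, map_mul, map_neg, map_add, map_one, map_ofNat,
    IntermediateField.coe_val, coe_sqrtElem] at hβC
  have hm' : (3 : ℝ) ≤ m := by exact_mod_cast hm
  have hnorm : Complex.normSq (β : Qsqrt (1 - 2 * m ^ p)) = (2 * m : ℤ) := by
    refine (pow_left_inj₀ (Complex.normSq_nonneg _) (by push_cast; linarith) hp.ne_zero).mp ?_
    rw [normSq_pow_of_pow_eq hd hpodd hβC]
    push_cast
    rw [mul_pow, ← pow_sub_one_mul hp.ne_zero (2 : ℝ)]
    ring
  obtain ⟨s, t, hst⟩ := exists_int_sq_eq_mul_of_normSq_eq hd β hnorm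
  exact sq_ne_mul_of_squarefree hm hmodd hp3 hsf s t hst
end
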